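/- arXiv:2407.08785 — 3 statements merged into one kernel-verified Lean document; each statement's English description precedes it below -/
import Mathlib

section
/- The kinetic norm is subadditive with respect to the Galilean group operation: |||z ∘ z'||| ≤ |||z||| + |||z'||| for all z, z' ∈ ℝ^{2d+1}. -/
open MeasureTheory Set

noncomputable section

abbrev KPoint (d : ℕ) := ℝ × EuclideanSpace ℝ (Fin d) × EuclideanSpace ℝ (Fin d)

/-- Galilean group operation `z ∘ z' = (t + t', x + x' + t' v, v + v')`. -/
def kmul {d : ℕ} (z z' : KPoint d) : KPoint d :=
  (z.1 + z'.1, z.2.1 + z'.2.1 + z'.1 • z.2.2, z.2.2 + z'.2.2)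

/-- Galilean inverse `z⁻¹ = (-t, -x + t v, -v)`. -/
def kinv {d : ℕ} (z : KPoint d) : KPoint d :=
  (-z.1, -z.2.1 + z.1 • z.2.2, -z.2.2)

/-- Kinetic norm `|||z||| = inf_w max{|t|^(1/2), |x - t w|^(1/3), |v - w|, |w|}`. -/
def knorm {d : ℕ} (z : KPoint d) : ℝ :=
  ⨅ w : EuclideanSpace ℝ (Fin d),
    max (max (|z.1| ^ ((1:ℝ)/2)) (‖z.2.1 - z.1 • w‖ ^ ((1:ℝ)/3)))
      (max ‖z.2.2 - w‖ ‖w‖)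

lemma kn_le_sq {u c : ℝ} (hu : 0 ≤ u) (h : u ^ ((1:ℝ)/2) ≤ c) : u ≤ c ^ 2 := by
  have h0 : 0 ≤ u ^ ((1:ℝ)/2) := Real.rpow_nonneg hu _
  have := pow_le_pow_left₀ h0 h 2
  calc u = (u ^ ((1:ℝ)/2)) ^ 2 := by
        rw [← Real.rpow_natCast (u ^ ((1:ℝ)/2)) 2, ← Real.rpow_mul hu]
        norm_num
    _ ≤ c ^ 2 := this

lemma kn_le_cube {u c : ℝ} (hu : 0 ≤ u) (h : u ^ ((1:ℝ)/3) ≤ c) : u ≤ c ^ 3 := by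
  have h0 : 0 ≤ u ^ ((1:ℝ)/3) := Real.rpow_nonneg hu _
  have := pow_le_pow_left₀ h0 h 3
  calc u = (u ^ ((1:ℝ)/3)) ^ 3 := by
        rw [← Real.rpow_natCast (u ^ ((1:ℝ)/3)) 3, ← Real.rpow_mul hu]
        norm_num
    _ ≤ c ^ 3 := this

lemma kn_rpow_half_le {u c : ℝ} (hu : 0 ≤ u) (hc : 0 ≤ c) (h : u ≤ c ^ 2) :
    u ^ ((1:ℝ)/2) ≤ c := by
  have := Real.rpow_le_rpow hu h (by norm_num : (0:ℝ) ≤ 1/2)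
  rwa [← Real.rpow_natCast c 2, ← Real.rpow_mul hc, show ((2:ℕ):ℝ) * (1/2) = 1 by norm_num,
    Real.rpow_one] at this

lemma kn_rpow_third_le {u c : ℝ} (hu : 0 ≤ u) (hc : 0 ≤ c) (h : u ≤ c ^ 3) :
    u ^ ((1:ℝ)/3) ≤ c := by
  have := Real.rpow_le_rpow hu h (by norm_num : (0:ℝ) ≤ 1/3)
  rwa [← Real.rpow_natCast c 3, ← Real.rpow_mul hc, show ((3:ℕ):ℝ) * (1/3) = 1 by norm_num,
    Real.rpow_one] at this

/-- Subadditivity of the kinetic norm with respect to the Galilean operation. -/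
theorem knorm_subadditive (d : ℕ) (z z' : KPoint d) :
    knorm (kmul z z') ≤ knorm z + knorm z' := by
  unfold knorm
  apply le_ciInf_add_ciInf
  intro w w'
  set a := max (max (|z.1| ^ ((1:ℝ)/2)) (‖z.2.1 - z.1 • w‖ ^ ((1:ℝ)/3)))
      (max ‖z.2.2 - w‖ ‖w‖) with ha
  set b := max (max (|z'.1| ^ ((1:ℝ)/2)) (‖z'.2.1 - z'.1 • w'‖ ^ ((1:ℝ)/3)))
      (max ‖z'.2.2 - w'‖ ‖w'‖) with hb
  have ha0 : 0 ≤ a := le_trans (Real.rpow_nonneg (abs_nonneg _) _)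
    (le_max_of_le_left (le_max_left _ _))
  have hb0 : 0 ≤ b := le_trans (Real.rpow_nonneg (abs_nonneg _) _)
    (le_max_of_le_left (le_max_left _ _))
  -- component bounds
  have hta : |z.1| ≤ a ^ 2 := kn_le_sq (abs_nonneg _)
    (le_trans (le_max_left _ _) (le_max_left _ _))
  have htb : |z'.1| ≤ b ^ 2 := kn_le_sq (abs_nonneg _)
    (le_trans (le_max_left _ _) (le_max_left _ _))
  have hxa : ‖z.2.1 - z.1 • w‖ ≤ a ^ 3 := kn_le_cube (norm_nonneg _)
    (le_trans (le_max_right _ _) (le_max_left _ _))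
  have hxb : ‖z'.2.1 - z'.1 • w'‖ ≤ b ^ 3 := kn_le_cube (norm_nonneg _)
    (le_trans (le_max_right _ _) (le_max_left _ _))
  have hva : ‖z.2.2 - w‖ ≤ a := le_trans (le_max_left _ _) (le_max_right _ _)
  have hvb : ‖z'.2.2 - w'‖ ≤ b := le_trans (le_max_left _ _) (le_max_right _ _)
  have hwa : ‖w‖ ≤ a := le_trans (le_max_right _ _) (le_max_right _ _)
  have hwb : ‖w'‖ ≤ b := le_trans (le_max_right _ _) (le_max_right _ _)
  -- bound the value at witness w + w'
  refine le_trans (ciInf_le ?_ (w + w')) ?_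
  · refine ⟨0, ?_⟩
    rintro _ ⟨u, rfl⟩
    exact le_trans (Real.rpow_nonneg (abs_nonneg _) _)
      (le_max_of_le_left (le_max_left _ _))
  simp only [kmul]
  have h1 : |(z.1 + z'.1 : ℝ)| ^ ((1:ℝ)/2) ≤ a + b := by
    refine kn_rpow_half_le (abs_nonneg _) (by linarith) ?_
    calc |z.1 + z'.1| ≤ |z.1| + |z'.1| := abs_add_le _ _
      _ ≤ a ^ 2 + b ^ 2 := add_le_add hta htb
      _ ≤ (a + b) ^ 2 := by nlinarith
  have h2 : ‖z.2.1 + z'.2.1 + z'.1 • z.2.2 - (z.1 + z'.1) • (w + w')‖ ^ ((1:ℝ)/3)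
      ≤ a + b := by
    refine kn_rpow_third_le (norm_nonneg _) (by linarith) ?_
    have heq : z.2.1 + z'.2.1 + z'.1 • z.2.2 - (z.1 + z'.1) • (w + w')
        = (z.2.1 - z.1 • w) + (z'.2.1 - z'.1 • w') + z'.1 • (z.2.2 - w)
          + (-z.1) • w' := by module
    rw [heq]
    calc ‖(z.2.1 - z.1 • w) + (z'.2.1 - z'.1 • w') + z'.1 • (z.2.2 - w) + (-z.1) • w'‖
        ≤ ‖z.2.1 - z.1 • w‖ + ‖z'.2.1 - z'.1 • w'‖ + ‖z'.1 • (z.2.2 - w)‖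
          + ‖(-z.1) • w'‖ := by
          exact le_trans (norm_add_le _ _) (by
            gcongr
            exact le_trans (norm_add_le _ _) (by gcongr; exact norm_add_le _ _))
      _ = ‖z.2.1 - z.1 • w‖ + ‖z'.2.1 - z'.1 • w'‖ + |z'.1| * ‖z.2.2 - w‖
          + |z.1| * ‖w'‖ := by
          rw [norm_smul, norm_smul, Real.norm_eq_abs, Real.norm_eq_abs, abs_neg]
      _ ≤ a ^ 3 + b ^ 3 + b ^ 2 * a + a ^ 2 * b := by
          gcongr <;> first | exact norm_nonneg _ | assumption
      _ ≤ (a + b) ^ 3 := by nlinarith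
  have h3 : ‖z.2.2 + z'.2.2 - (w + w')‖ ≤ a + b := by
    have heq : z.2.2 + z'.2.2 - (w + w') = (z.2.2 - w) + (z'.2.2 - w') := by abel
    rw [heq]
    exact le_trans (norm_add_le _ _) (add_le_add hva hvb)
  have h4 : ‖w + w'‖ ≤ a + b := le_trans (norm_add_le _ _) (add_le_add hwa hwb)
  exact max_le (max_le h1 h2) (max_le h3 h4)
end
end

section
/- If (x, v) ∈ 𝒩_R (i.e., the point (0, x, v) has kinetic distance at least √(R/10) from the boundary set ℝ × ∂ℍ × ℝ^d, where ∂ℍ = {x₁ = 0}), then x₁ ≥ (R/10)|v₁|. -/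
open MeasureTheory Set

noncomputable section

/-- Kinetic distance `d_kin(z', z) = |||z⁻¹ ∘ z'|||`. -/
def dkin {d : ℕ} (z' z : KPoint d) : ℝ := knorm (kmul (kinv z) z')

/-- Distance of a point to a set: `dist(S, z) = inf_{s ∈ S} d_kin(s, z)`. -/
def kdist {d : ℕ} (S : Set (KPoint d)) (z : KPoint d) : ℝ :=
  sInf ((fun s => dkin s z) '' S)


lemma knorm_nonneg {d : ℕ} (z : KPoint d) : 0 ≤ knorm z := by
  apply Real.iInf_nonneg
  intro w
  have : (0:ℝ) ≤ |z.1| ^ ((1:ℝ)/2) := Real.rpow_nonneg (abs_nonneg _) _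
  exact le_trans this (le_trans (le_max_left _ _) (le_max_left _ _))

lemma knorm_le {d : ℕ} (z : KPoint d) (w : EuclideanSpace ℝ (Fin d)) :
    knorm z ≤ max (max (|z.1| ^ ((1:ℝ)/2)) (‖z.2.1 - z.1 • w‖ ^ ((1:ℝ)/3)))
      (max ‖z.2.2 - w‖ ‖w‖) := by
  apply ciInf_le
  refine ⟨0, ?_⟩
  rintro y ⟨w', rfl⟩
  have : (0:ℝ) ≤ |z.1| ^ ((1:ℝ)/2) := Real.rpow_nonneg (abs_nonneg _) _
  exact le_trans this (le_trans (le_max_left _ _) (le_max_left _ _))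

/-- If `(x,v) ∈ 𝒩_R`, i.e. `(0,x,v)` has kinetic distance at least `√(R/10)`
from `ℝ × ∂ℍ × ℝ^d`, then `x₁ ≥ (R/10)|v₁|`. -/
theorem transport_lower_bound (d : ℕ) (hd : 0 < d) (R : ℝ) (hR : 0 < R)
    (x v : EuclideanSpace ℝ (Fin d)) (hx : 0 < x ⟨0, hd⟩)
    (h : Real.sqrt (R / 10) ≤
      kdist {z : KPoint d | z.2.1 ⟨0, hd⟩ = 0} ((0 : ℝ), x, v)) :
    (R / 10) * |v ⟨0, hd⟩| ≤ x ⟨0, hd⟩ := by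
  set x1 := x ⟨0, hd⟩ with hx1
  set v1 := v ⟨0, hd⟩ with hv1
  rcases eq_or_ne v1 0 with hv | hv
  · rw [hv, abs_zero, mul_zero]; exact hx.le
  · set t : ℝ := -(x1 / v1) with ht
    set s : KPoint d := (t, x + t • v, v) with hs
    have hsmem : s ∈ {z : KPoint d | z.2.1 ⟨0, hd⟩ = 0} := by
      show (x + t • v) ⟨0, hd⟩ = 0
      have : (x + t • v) ⟨0, hd⟩ = x1 + t * v1 := rfl
      rw [this, ht]
      field_simp
      ring
    have hkd : kdist {z : KPoint d | z.2.1 ⟨0, hd⟩ = 0} ((0 : ℝ), x, v) ≤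
        dkin s ((0 : ℝ), x, v) := by
      apply csInf_le
      · refine ⟨0, ?_⟩
        rintro y ⟨z', _, rfl⟩
        exact knorm_nonneg _
      · exact ⟨s, hsmem, rfl⟩
    have hmul : kmul (kinv ((0 : ℝ), x, v)) s = (t, (0 : EuclideanSpace ℝ (Fin d)),
        (0 : EuclideanSpace ℝ (Fin d))) := by
      simp only [kmul, kinv, hs]
      refine Prod.ext ?_ (Prod.ext ?_ ?_)
      · simp
      · show -x + (0:ℝ) • v + (x + t • v) + t • (-v) = 0
        module
      · show -v + v = 0
        module
    have hdk : dkin s ((0 : ℝ), x, v) ≤ |t| ^ ((1:ℝ)/2) := by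
      rw [dkin, hmul]
      have h0 := knorm_le ((t, (0 : EuclideanSpace ℝ (Fin d)),
        (0 : EuclideanSpace ℝ (Fin d))) : KPoint d) 0
      have e1 : (0 : ℝ) ^ ((1:ℝ)/3) = 0 := Real.zero_rpow (by norm_num)
      simp only [smul_zero, sub_zero, norm_zero, e1, max_self] at h0
      rw [max_eq_left (Real.rpow_nonneg (abs_nonneg _) _),
        max_eq_left (Real.rpow_nonneg (abs_nonneg _) _)] at h0
      exact h0
    have hsq : Real.sqrt (R / 10) ≤ Real.sqrt |t| := by
      have e2 : |t| ^ ((1:ℝ)/2) = Real.sqrt |t| := (Real.sqrt_eq_rpow _).symm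
      exact le_trans h (le_trans hkd (hdk.trans_eq e2))
    have hRt : R / 10 ≤ |t| := (Real.sqrt_le_sqrt_iff (abs_nonneg _)).mp hsq
    have habs : |t| = x1 / |v1| := by
      rw [ht, abs_neg, abs_div, abs_of_pos hx]
    rw [habs] at hRt
    calc R / 10 * |v1| ≤ x1 / |v1| * |v1| := by
          apply mul_le_mul_of_nonneg_right hRt (abs_nonneg _)
      _ = x1 := div_mul_cancel₀ _ (abs_ne_zero.mpr hv)
end
end

section
/- Suppose (x,v) ∈ ℍ × ℝ^d satisfies dist(ℝ × γ₋, (0,x,v)) ≥ √(R/2) (where γ₋ = {x₁=0, v₁>0}) and dist(ℝ × γ₊, (0,x,v)) ≤ √(R/10) (where γ₊ = {x₁=0, v₁<0}). Then x₁/|v₁| ≤ R/4 (in particular v₁ ≠ 0). -/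
open MeasureTheory Set

noncomputable section

lemma coord_le_norm {d : ℕ} (u : EuclideanSpace ℝ (Fin d)) (i : Fin d) :
    |u i| ≤ ‖u‖ := by
  rw [EuclideanSpace.norm_eq]
  have h1 : |u i| = Real.sqrt (‖u i‖ ^ 2) := by
    rw [Real.sqrt_sq_eq_abs]; simp
  rw [h1]
  apply Real.sqrt_le_sqrt
  exact Finset.single_le_sum (f := fun j => ‖u j‖ ^ 2)
    (fun j _ => by positivity) (Finset.mem_univ i)

lemma knorm_term_nonneg {d : ℕ} (z : KPoint d) (w : EuclideanSpace ℝ (Fin d)) :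
    0 ≤ max (max (|z.1| ^ ((1:ℝ)/2)) (‖z.2.1 - z.1 • w‖ ^ ((1:ℝ)/3)))
      (max ‖z.2.2 - w‖ ‖w‖) :=
  le_trans (norm_nonneg w) (le_trans (le_max_right _ _) (le_max_right _ _))

lemma knorm_bddBelow {d : ℕ} (z : KPoint d) :
    BddBelow (Set.range fun w : EuclideanSpace ℝ (Fin d) =>
      max (max (|z.1| ^ ((1:ℝ)/2)) (‖z.2.1 - z.1 • w‖ ^ ((1:ℝ)/3)))
        (max ‖z.2.2 - w‖ ‖w‖)) := by
  refine ⟨0, ?_⟩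
  rintro y ⟨w, rfl⟩
  exact knorm_term_nonneg z w

lemma dkin_nonneg {d : ℕ} (z' z : KPoint d) : 0 ≤ dkin z' z := knorm_nonneg _

lemma kdist_le {d : ℕ} (S : Set (KPoint d)) (z s : KPoint d) (hs : s ∈ S) :
    kdist S z ≤ dkin s z := by
  apply csInf_le
  · exact ⟨0, by rintro y ⟨s', _, rfl⟩; exact dkin_nonneg _ _⟩
  · exact ⟨s, hs, rfl⟩

example : True := trivial

lemma dkin_eval {d : ℕ} (x v y w : EuclideanSpace ℝ (Fin d)) (t : ℝ) :
    dkin (t, y, w) ((0:ℝ), x, v) = knorm (t, y - x - t • v, w - v) := by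
  unfold dkin kinv kmul
  congr 1
  simp only [Prod.mk.injEq]
  refine ⟨by ring, ?_, ?_⟩ <;> module

lemma rpow_half_lt {t r : ℝ} (hr : 0 < r) (h : |t| ^ ((1:ℝ)/2) < r) : |t| < r ^ 2 := by
  have h0 : |t| = (|t| ^ ((1:ℝ)/2)) ^ (2:ℕ) := by
    rw [← Real.rpow_natCast (|t| ^ ((1:ℝ)/2)) 2, ← Real.rpow_mul (abs_nonneg t)]
    norm_num
  rw [h0]
  exact pow_lt_pow_left₀ h (Real.rpow_nonneg (abs_nonneg t) _) (by norm_num)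

lemma rpow_third_lt {s r : ℝ} (hs : 0 ≤ s) (h : s ^ ((1:ℝ)/3) < r) : s < r ^ 3 := by
  have h0 : s = (s ^ ((1:ℝ)/3)) ^ (3:ℕ) := by
    rw [← Real.rpow_natCast (s ^ ((1:ℝ)/3)) 3, ← Real.rpow_mul hs]
    norm_num
  rw [h0]
  exact pow_lt_pow_left₀ h (Real.rpow_nonneg hs _) (by norm_num)

lemma rpow_third_cube {s c : ℝ} (hs : 0 ≤ s) (h : c ≤ s ^ ((1:ℝ)/3)) (hc : 0 ≤ c) :
    c ^ 3 ≤ s := by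
  have h0 : s = (s ^ ((1:ℝ)/3)) ^ (3:ℕ) := by
    rw [← Real.rpow_natCast (s ^ ((1:ℝ)/3)) 3, ← Real.rpow_mul hs]
    norm_num
  rw [h0]
  exact pow_le_pow_left₀ hc h 3

lemma far_bound {d : ℕ} (hd : 0 < d) (x v : EuclideanSpace ℝ (Fin d)) (hx : 0 < x ⟨0, hd⟩)
    {s : ℝ} (hs : 0 < s)
    (hfar : s ≤ kdist {z : KPoint d | z.2.1 ⟨0, hd⟩ = 0 ∧ 0 < z.2.2 ⟨0, hd⟩} ((0:ℝ), x, v)) :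
    s ≤ max ((x ⟨0, hd⟩) ^ ((1:ℝ)/3)) (-(v ⟨0, hd⟩)) := by
  by_contra hcon
  push_neg at hcon
  set i : Fin d := ⟨0, hd⟩ with hi
  obtain ⟨h1, h2⟩ := max_lt_iff.mp hcon
  have ha3 : 0 ≤ (x i) ^ ((1:ℝ)/3) := Real.rpow_nonneg hx.le _
  set m : ℝ := max ((x i) ^ ((1:ℝ)/3)) (max (-(v i)) 0) with hm
  have hms : m < s := max_lt h1 (max_lt h2 hs)
  have hm0 : 0 ≤ m := le_trans (le_max_right _ _) (le_max_right _ _)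
  set p : ℝ := (m + s)/2 with hp
  have hp0 : 0 < p := by positivity
  have hmp : m < p := by rw [hp]; linarith
  have hpb : -(v i) < p :=
    lt_of_le_of_lt (le_trans (le_max_left _ _) (le_max_right _ _)) hmp
  set E : EuclideanSpace ℝ (Fin d) := EuclideanSpace.single i (1:ℝ) with hE
  have hnE : ‖E‖ = 1 := by rw [hE, EuclideanSpace.norm_single]; norm_num
  have key : dkin ((0:ℝ), x - (x i) • E, v + p • E) ((0:ℝ), x, v)
      ≤ max ((x i) ^ ((1:ℝ)/3)) p := by
    rw [dkin_eval]
    have hA : ((x - (x i) • E) - x - (0:ℝ) • v) = (-(x i)) • E := by module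
    have hB : ((v + p • E) - v) = p • E := by module
    rw [hA, hB]
    refine le_trans (knorm_le _ 0) ?_
    simp only [abs_zero, smul_zero, sub_zero, norm_zero, norm_smul, hnE, mul_one,
      Real.norm_eq_abs, abs_neg, abs_of_pos hx, abs_of_pos hp0]
    rw [Real.zero_rpow (by norm_num : (1:ℝ)/2 ≠ 0)]
    rw [max_eq_right ha3, max_eq_left hp0.le]
  have hmem : ((0:ℝ), x - (x i) • E, v + p • E) ∈
      {z : KPoint d | z.2.1 ⟨0, hd⟩ = 0 ∧ 0 < z.2.2 ⟨0, hd⟩} := by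
    constructor
    · show (x - (x i) • E) i = 0
      simp [hE, EuclideanSpace.single_apply]
    · show 0 < (v + p • E) i
      simp only [hE, PiLp.add_apply, PiLp.smul_apply, EuclideanSpace.single_apply,
        smul_eq_mul, mul_one, reduceIte]
      linarith
  have hchain := le_trans hfar (le_trans (kdist_le _ _ _ hmem) key)
  have : max ((x i) ^ ((1:ℝ)/3)) p < s := max_lt h1 (by rw [hp]; linarith)
  linarith [lt_of_le_of_lt hchain this]

/-- If `(0,x,v)` is at kinetic distance at least `√(R/2)` from `ℝ × γ₋` and at
most `√(R/10)` from `ℝ × γ₊`, then `x₁/|v₁| ≤ R/4` (in particular `v₁ ≠ 0`). -/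
theorem outgoing_region_bound (d : ℕ) (hd : 0 < d) (R : ℝ) (hR : 0 < R)
    (x v : EuclideanSpace ℝ (Fin d)) (hx : 0 < x ⟨0, hd⟩)
    (hfar : Real.sqrt (R / 2) ≤
      kdist {z : KPoint d | z.2.1 ⟨0, hd⟩ = 0 ∧ 0 < z.2.2 ⟨0, hd⟩} ((0 : ℝ), x, v))
    (hclose : kdist {z : KPoint d | z.2.1 ⟨0, hd⟩ = 0 ∧ z.2.2 ⟨0, hd⟩ < 0} ((0 : ℝ), x, v) ≤
      Real.sqrt (R / 10)) :
    v ⟨0, hd⟩ ≠ 0 ∧ x ⟨0, hd⟩ / |v ⟨0, hd⟩| ≤ R / 4 := by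
  set i : Fin d := ⟨0, hd⟩ with hi
  set r := Real.sqrt (R/8) with hrdef
  have hrpos : 0 < r := Real.sqrt_pos.mpr (by linarith)
  have hr2 : r^2 = R/8 := Real.sq_sqrt (by linarith)
  have hs2 : Real.sqrt (R/2) = 2*r := by
    rw [hrdef, show R/2 = 2^2*(R/8) by ring, Real.sqrt_mul (by positivity) _,
      Real.sqrt_sq (by norm_num : (0:ℝ) ≤ 2)]
  have hH1 := far_bound hd x v hx (Real.sqrt_pos.mpr (by linarith : 0 < R/2)) hfar
  rw [hs2] at hH1
  -- extraction from hclose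
  have hEx : ∃ t : ℝ, ∃ y w w' : EuclideanSpace ℝ (Fin d), y i = 0 ∧ w i < 0 ∧
      max (max (|t| ^ ((1:ℝ)/2)) (‖(y - x - t•v) - t • w'‖ ^ ((1:ℝ)/3)))
        (max ‖(w - v) - w'‖ ‖w'‖) < r := by
    have hne : Set.Nonempty ((fun s => dkin s ((0:ℝ),x,v)) ''
        {z : KPoint d | z.2.1 i = 0 ∧ z.2.2 i < 0}) := by
      refine ⟨_, ⟨((0:ℝ), (0:EuclideanSpace ℝ (Fin d)),
        -(EuclideanSpace.single i (1:ℝ))), ⟨?_, ?_⟩, rfl⟩⟩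
      · simp
      · show (-(EuclideanSpace.single i (1:ℝ))) i < 0
        simp [EuclideanSpace.single_apply]
    have hlt : kdist {z : KPoint d | z.2.1 i = 0 ∧ z.2.2 i < 0} ((0:ℝ),x,v) < r :=
      lt_of_le_of_lt hclose (Real.sqrt_lt_sqrt (by positivity) (by linarith))
    rw [kdist] at hlt
    obtain ⟨val, ⟨⟨t, y, w⟩, ⟨hy, hw⟩, rfl⟩, hlt'⟩ := exists_lt_of_csInf_lt hne hlt
    simp only at hlt'
    rw [dkin_eval, knorm] at hlt'
    obtain ⟨w', hw'⟩ := exists_lt_of_ciInf_lt hlt'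
    exact ⟨t, y, w, w', hy, hw, hw'⟩
  obtain ⟨t, y, w, w', hy, hw, hM⟩ := hEx
  obtain ⟨hM1, hM2⟩ := max_lt_iff.mp hM
  obtain ⟨hMt, hMpos⟩ := max_lt_iff.mp hM1
  obtain ⟨hMvel, hMw'⟩ := max_lt_iff.mp hM2
  have hT : |t| < r^2 := rpow_half_lt hrpos hMt
  have hPos : ‖(y - x - t•v) - t•w'‖ < r^3 := rpow_third_lt (norm_nonneg _) hMpos
  have hA : |x i + t*(v i + w' i)| < r^3 := by
    have h := lt_of_le_of_lt (coord_le_norm ((y - x - t•v) - t•w') i) hPos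
    have he : ((y - x - t•v) - t•w') i = -(x i + t*(v i + w' i)) := by
      simp [hy]; ring
    rw [he, abs_neg] at h; exact h
  have hB : |w i - v i - w' i| < r := by
    have h := lt_of_le_of_lt (coord_le_norm ((w - v) - w') i) hMvel
    have he : ((w - v) - w') i = w i - v i - w' i := by simp
    rwa [he] at h
  have hC : |w' i| < r := lt_of_le_of_lt (coord_le_norm w' i) hMw'
  -- F2 : v i < 2r
  have hb2r : v i < 2*r := by
    have h1 := abs_lt.mp hB
    have h2 := abs_lt.mp hC
    linarith [h1.1, h2.1, hw]
  -- F1 : x i < 2r³ + r²|v i|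
  have habc : |v i + w' i| ≤ |v i| + r := le_trans (abs_add_le _ _) (by linarith [hC])
  have htv : |t * (v i + w' i)| ≤ r^2 * (|v i| + r) := by
    rw [abs_mul]; exact mul_le_mul hT.le habc (abs_nonneg _) (by positivity)
  have hF1 : x i < 2*r^3 + r^2 * |v i| := by
    have h0 : |x i| ≤ |x i + t*(v i + w' i)| + |t*(v i + w' i)| := by
      calc |x i| = |(x i + t*(v i + w' i)) - t*(v i + w' i)| := by congr 1; ring
        _ ≤ _ := abs_sub _ _
    rw [abs_of_pos hx] at h0
    have hr3 : r^2 * (|v i| + r) = r^2 * |v i| + r^3 := by ring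
    linarith [hA, htv]
  rcases le_max_iff.mp hH1 with hcase | hcase
  · -- 2r ≤ x i ^ (1/3)
    have h8 : 8*r^3 ≤ x i := by
      have h := rpow_third_cube hx.le hcase (by positivity)
      calc 8*r^3 = (2*r)^3 := by ring
        _ ≤ x i := h
    have hbneg : v i < 0 := by
      by_contra hb; push_neg at hb
      have habs : |v i| = v i := abs_of_nonneg hb
      rw [habs] at hF1
      nlinarith [mul_le_mul_of_nonneg_left hb2r.le (sq_nonneg r)]
    have habs : |v i| = -(v i) := abs_of_neg hbneg
    have hfin : x i ≤ R/4 * |v i| := by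
      by_contra hf; push_neg at hf
      have hR4 : R/4 = 2*r^2 := by rw [hr2]; ring
      rw [habs, hR4] at hf
      rw [habs] at hF1
      linarith [hF1, h8, hf, pow_pos hrpos 3]
    exact ⟨hbneg.ne, by rw [div_le_iff₀ (abs_pos.mpr hbneg.ne)]; linarith⟩
  · -- 2r ≤ -(v i)
    have hbneg : v i < 0 := by linarith [hcase, hrpos]
    have habs : |v i| = -(v i) := abs_of_neg hbneg
    have hfin : x i ≤ R/4 * |v i| := by
      rw [habs]; rw [habs] at hF1
      have hR4 : R/4 = 2*r^2 := by rw [hr2]; ring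
      rw [hR4]
      have hmul : r^2 * (2*r) ≤ r^2 * -(v i) :=
        mul_le_mul_of_nonneg_left hcase (by positivity)
      have he : r^2 * (2*r) = 2*r^3 := by ring
      linarith [hF1]
    exact ⟨hbneg.ne, by rw [div_le_iff₀ (abs_pos.mpr hbneg.ne)]; linarith⟩
end
end
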